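/- arXiv:1106.5845 — 5 statements merged into one kernel-verified Lean document; each statement's English description precedes it below -/
import Mathlib

section
/- Let G be a finite connected simple graph, let v_r be a vertex of G, let T be a set of vertices of G containing v_r, and let R = { {v_r, u} : u ∈ T \ {v_r} } be the star request set with center v_r and leaf set T \ {v_r}. If D is a dispersal of G satisfying R, then the edge set S = ⋃_{v ∈ V} D_v connects the terminal set T (i.e., any two vertices of T are joined by a walk in G using only edges of S), and |S| ≤ c(D). -/
open SimpleGraph Finset

/-- A dispersal `D` of `G` satisfies a request set `R` if for every request `{u,v} ∈ R`
there is a walk from `u` to `v` all of whose edges lie in `D u ∪ D v`. -/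
def Satisfies {V : Type*} (G : SimpleGraph V) (D : V → Finset (Sym2 V))
    (R : Set (Sym2 V)) : Prop :=
  ∀ u v : V, s(u, v) ∈ R → ∃ p : G.Walk u v, ∀ e ∈ p.edges, e ∈ D u ∨ e ∈ D v

/-- `D` is a dispersal of `G`: every assigned edge is an edge of `G`. -/
def IsDispersal {V : Type*} (G : SimpleGraph V) (D : V → Finset (Sym2 V)) : Prop :=
  ∀ v : V, ∀ e ∈ D v, e ∈ G.edgeSet

/-- The cost of a dispersal. -/
def cost {V : Type*} [Fintype V] (D : V → Finset (Sym2 V)) : ℕ :=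
  ∑ v, (D v).card

/-- An edge set `S` connects a terminal set `T` if any two vertices of `T` are joined by a
walk in `G` using only edges of `S`. -/
def Connects {V : Type*} (G : SimpleGraph V) (S : Finset (Sym2 V)) (T : Finset V) : Prop :=
  ∀ a ∈ T, ∀ b ∈ T, ∃ p : G.Walk a b, ∀ e ∈ p.edges, e ∈ S

/-- The star request set with center `vr` and leaf set `T \ {vr}`. -/
def starR {V : Type*} (vr : V) (T : Finset V) : Set (Sym2 V) :=
  {e | ∃ u ∈ T, u ≠ vr ∧ e = s(vr, u)}

section

variable {V : Type*} {G : SimpleGraph V}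

theorem Satisfies.exists_walk_edges_subset_biUnion [Fintype V] [DecidableEq V]
    {D : V → Finset (Sym2 V)} {R : Set (Sym2 V)} (hsat : Satisfies G D R) {u v : V}
    (huv : s(u, v) ∈ R) : ∃ p : G.Walk u v, ∀ e ∈ p.edges, e ∈ univ.biUnion D := by
  obtain ⟨p, hp⟩ := hsat u v huv
  refine ⟨p, fun e he => mem_biUnion.2 ?_⟩
  rcases hp e he with h | h
  exacts [⟨u, mem_univ _, h⟩, ⟨v, mem_univ _, h⟩]

theorem Satisfies.exists_walk_from_center [Fintype V] [DecidableEq V]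
    {D : V → Finset (Sym2 V)} {vr : V} {T : Finset V} (hsat : Satisfies G D (starR vr T))
    {u : V} (hu : u ∈ T) : ∃ p : G.Walk vr u, ∀ e ∈ p.edges, e ∈ univ.biUnion D := by
  by_cases h : u = vr
  · subst h
    exact ⟨Walk.nil, by simp⟩
  · exact hsat.exists_walk_edges_subset_biUnion ⟨u, hu, h, rfl⟩

theorem connects_of_forall_exists_walk_from {S : Finset (Sym2 V)} {T : Finset V} (c : V)
    (hc : ∀ a ∈ T, ∃ p : G.Walk c a, ∀ e ∈ p.edges, e ∈ S) : Connects G S T := by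
  intro a ha b hb
  obtain ⟨p, hp⟩ := hc a ha
  obtain ⟨q, hq⟩ := hc b hb
  refine ⟨p.reverse.append q, fun e he => ?_⟩
  rw [Walk.edges_append, Walk.edges_reverse, List.mem_append, List.mem_reverse] at he
  exact he.elim (hp e) (hq e)

end

theorem stmt0_general {V : Type*} [Fintype V] [DecidableEq V]
    (G : SimpleGraph V)
    (vr : V) (T : Finset V)
    (D : V → Finset (Sym2 V))
    (hsat : Satisfies G D (starR vr T)) :
    Connects G (Finset.univ.biUnion D) T ∧
      (Finset.univ.biUnion D).card ≤ cost D :=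
  ⟨connects_of_forall_exists_walk_from vr fun _ hu => hsat.exists_walk_from_center hu,
    card_biUnion_le⟩

theorem stmt0 {V : Type*} [Fintype V] [DecidableEq V]
    (G : SimpleGraph V) (hG : G.Connected)
    (vr : V) (T : Finset V) (hvr : vr ∈ T)
    (D : V → Finset (Sym2 V)) (hD : IsDispersal G D)
    (hsat : Satisfies G D (starR vr T)) :
    Connects G (Finset.univ.biUnion D) T ∧
      (Finset.univ.biUnion D).card ≤ cost D :=
  stmt0_general G vr T D hsat
end

section
/- Let G be a finite connected simple graph, let T be a nonempty set of vertices of G, let v_r ∈ T, and let R = { {v_r, u} : u ∈ T \ {v_r} } be the corresponding star request set. Then the minimum cost c_min(G, R) of a dispersal of G satisfying R equals the minimum cardinality of an edge set S ⊆ E that connects the terminal set T. -/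
/-!
A connecting edge set `S` yields a dispersal of cost `|S|` by handing all of `S` to `vr`. Conversely,
every request of a star contains `vr`, so for a satisfying dispersal `D` the edges held by the
terminals, `⋃_{v ∈ T} D v`, connect any two terminals through `vr`, and there are at most `c(D)`
of them. Hence the two sets of values have the same minimum.
-/

open SimpleGraph Finset

/-- The minimum cost of a dispersal of `G` satisfying `R`. -/
noncomputable def cmin {V : Type*} [Fintype V] (G : SimpleGraph V) (R : Set (Sym2 V)) : ℕ :=
  sInf {c | ∃ D : V → Finset (Sym2 V), IsDispersal G D ∧ Satisfies G D R ∧ cost D = c}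

theorem Nat.sInf_eq_of_subset_of_forall_exists_le {A B : Set ℕ} (hBA : B ⊆ A)
    (hAB : ∀ a ∈ A, ∃ b ∈ B, b ≤ a) : sInf A = sInf B := by
  rcases A.eq_empty_or_nonempty with rfl | hA
  · rw [Set.subset_empty_iff.mp hBA]
  obtain ⟨b, hb, hba⟩ := hAB _ (Nat.sInf_mem hA)
  exact le_antisymm (Nat.sInf_le (hBA (Nat.sInf_mem ⟨b, hb⟩))) ((Nat.sInf_le hb).trans hba)

section Dispersal

variable {V : Type*} {G : SimpleGraph V} {D : V → Finset (Sym2 V)} {T : Finset V} {vr : V}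

theorem Satisfies.exists_walk_of_starR (hD : Satisfies G D (starR vr T)) {a : V} (ha : a ∈ T) :
    ∃ p : G.Walk vr a, ∀ e ∈ p.edges, e ∈ D vr ∨ e ∈ D a := by
  by_cases h : a = vr
  · subst h
    exact ⟨Walk.nil, by simp⟩
  · exact hD vr a ⟨a, ha, h, rfl⟩

theorem Satisfies.connects_biUnion [DecidableEq V] (hD : Satisfies G D (starR vr T))
    (hvr : vr ∈ T) : Connects G (T.biUnion D) T := by
  intro a ha b hb
  obtain ⟨pa, hpa⟩ := hD.exists_walk_of_starR ha
  obtain ⟨pb, hpb⟩ := hD.exists_walk_of_starR hb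
  have held : ∀ {x}, x ∈ T → ∀ {e}, e ∈ D vr ∨ e ∈ D x → e ∈ T.biUnion D := fun hx _ he =>
    he.elim (fun h => mem_biUnion.mpr ⟨vr, hvr, h⟩) (fun h => mem_biUnion.mpr ⟨_, hx, h⟩)
  refine ⟨pa.reverse.append pb, fun e he => ?_⟩
  rw [Walk.edges_append, List.mem_append, Walk.edges_reverse, List.mem_reverse] at he
  exact he.elim (fun he => held ha (hpa e he)) (fun he => held hb (hpb e he))

theorem IsDispersal.biUnion_subset_edgeSet [DecidableEq V] (hD : IsDispersal G D) :
    ∀ e ∈ T.biUnion D, e ∈ G.edgeSet := by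
  intro e he
  obtain ⟨v, -, hv⟩ := mem_biUnion.mp he
  exact hD v e hv

theorem card_biUnion_le_cost [Fintype V] [DecidableEq V] : (T.biUnion D).card ≤ cost D :=
  card_biUnion_le.trans (sum_le_sum_of_subset (subset_univ T))

end Dispersal

section Concentrated

variable {V : Type*} [DecidableEq V] {G : SimpleGraph V} {S : Finset (Sym2 V)} (vr : V)

theorem isDispersal_update (hS : ∀ e ∈ S, e ∈ G.edgeSet) :
    IsDispersal G (Function.update (fun _ => ∅) vr S) := by
  intro v e he
  by_cases h : v = vr
  · subst h
    exact hS e (by simpa using he)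
  · simp [h] at he

theorem satisfies_starR_update {T : Finset V} (hS : Connects G S T) (hvr : vr ∈ T) :
    Satisfies G (Function.update (fun _ => ∅) vr S) (starR vr T) := by
  rintro u v ⟨w, hw, -, huv⟩
  rcases Sym2.eq_iff.mp huv with ⟨rfl, rfl⟩ | ⟨rfl, rfl⟩
  · obtain ⟨p, hp⟩ := hS _ hvr _ hw
    exact ⟨p, fun e he => Or.inl (by simpa using hp e he)⟩
  · obtain ⟨p, hp⟩ := hS _ hw _ hvr
    exact ⟨p, fun e he => Or.inr (by simpa using hp e he)⟩

theorem cost_update [Fintype V] : cost (Function.update (fun _ => ∅) vr S) = S.card := by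
  simp [cost, Function.update_apply, apply_ite card]

end Concentrated

theorem stmt2_general {V : Type*} [Fintype V]
    (G : SimpleGraph V)
    (T : Finset V) (vr : V) (hvr : vr ∈ T) :
    cmin G (starR vr T) =
      sInf {k | ∃ S : Finset (Sym2 V), (∀ e ∈ S, e ∈ G.edgeSet) ∧ Connects G S T ∧
        S.card = k} := by
  classical
  apply Nat.sInf_eq_of_subset_of_forall_exists_le
  · rintro _ ⟨S, hSG, hST, rfl⟩
    exact ⟨_, isDispersal_update vr hSG, satisfies_starR_update vr hST hvr, cost_update vr⟩
  · rintro _ ⟨D, hD, hsat, rfl⟩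
    exact ⟨_, ⟨T.biUnion D, hD.biUnion_subset_edgeSet, hsat.connects_biUnion hvr, rfl⟩,
      card_biUnion_le_cost⟩

theorem stmt2 {V : Type*} [Fintype V] [DecidableEq V]
    (G : SimpleGraph V) (hG : G.Connected)
    (T : Finset V) (hT : T.Nonempty) (vr : V) (hvr : vr ∈ T) :
    cmin G (starR vr T) =
      sInf {k | ∃ S : Finset (Sym2 V), (∀ e ∈ S, e ∈ G.edgeSet) ∧ Connects G S T ∧
        S.card = k} :=
  stmt2_general G T vr hvr
end

section
/- Let G be a finite connected simple graph and let R be a request set on G such that the request graph H_R (whose vertices are the endpoints of requests and whose edges are the requests) is a tree. Then there exists a dispersal D of G satisfying R with cost c(D) = c_min(G, R) that well-satisfies every request in R: for every {u,v} ∈ R there is a vertex α (a connecting point) such that some walk from u to α has all its edges in D_u and some walk from α to v has all its edges in D_v. -/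
open SimpleGraph Finset

/-- `D` well-satisfies the request `{u,v}`: there is a connecting point `α` such that some
walk from `u` to `α` has all its edges in `D u` and some walk from `α` to `v` has all its
edges in `D v`. -/
def WellSat {V : Type*} (G : SimpleGraph V) (D : V → Finset (Sym2 V)) (u v : V) : Prop :=
  ∃ α : V, (∃ p : G.Walk u α, ∀ e ∈ p.edges, e ∈ D u) ∧
    (∃ q : G.Walk α v, ∀ e ∈ q.edges, e ∈ D v)


/-!
Start from an optimal dispersal and treat the requests leaf first in the forest `H_R`. If `d` is
a leaf of the remaining forest with neighbour `r`, let `d` keep only the edges of its own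
component (in the graph of `D d`) and give the rest of `D d` to `r`. The walk satisfying `{r, d}`
reaches the component of `d` through edges now owned by `r`, so its first vertex there is a
connecting point. The cost does not increase, no vertex reaches less than before, and `d` lies
in no other remaining request, so the other requests stay satisfied and the induction goes on.
The final dispersal costs at most `c_min` and satisfies `R`, hence is optimal.
-/

section

variable {V : Type*} {G : SimpleGraph V}

def ReachVia (G : SimpleGraph V) (S : Finset (Sym2 V)) (x y : V) : Prop :=
  ∃ p : G.Walk x y, ∀ e ∈ p.edges, e ∈ S

namespace ReachVia

variable {S T : Finset (Sym2 V)} {x y z : V}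

lemma refl (G : SimpleGraph V) (S : Finset (Sym2 V)) (x : V) : ReachVia G S x x :=
  ⟨.nil, by simp⟩

lemma single (h : G.Adj x y) (he : s(x, y) ∈ S) : ReachVia G S x y :=
  ⟨.cons h .nil, by simpa using he⟩

lemma mono (hST : S ⊆ T) (h : ReachVia G S x y) : ReachVia G T x y :=
  let ⟨p, hp⟩ := h
  ⟨p, fun e he => hST (hp e he)⟩

lemma symm (h : ReachVia G S x y) : ReachVia G S y x :=
  let ⟨p, hp⟩ := h
  ⟨p.reverse, fun e he => hp e (by simpa using he)⟩

lemma trans (h : ReachVia G S x y) (h' : ReachVia G S y z) : ReachVia G S x z := by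
  obtain ⟨p, hp⟩ := h
  obtain ⟨q, hq⟩ := h'
  refine ⟨p.append q, fun e he => ?_⟩
  rw [SimpleGraph.Walk.edges_append, List.mem_append] at he
  exact he.elim (hp e) (hq e)

lemma of_mem_support {p : G.Walk x y} (hp : ∀ e ∈ p.edges, e ∈ S) (hz : z ∈ p.support) :
    ReachVia G S x z := by
  classical
  exact ⟨p.takeUntil z hz, fun e he => hp e (p.edges_takeUntil_subset_edges hz he)⟩

end ReachVia

open Classical in
noncomputable def componentEdges (G : SimpleGraph V) (S : Finset (Sym2 V)) (d : V) :
    Finset (Sym2 V) :=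
  S.filter fun e => ∃ y ∈ e, ReachVia G S d y

lemma mem_componentEdges {S : Finset (Sym2 V)} {d : V} {e : Sym2 V} :
    e ∈ componentEdges G S d ↔ e ∈ S ∧ ∃ y ∈ e, ReachVia G S d y := by
  classical
  simp [componentEdges]

lemma componentEdges_subset (S : Finset (Sym2 V)) (d : V) : componentEdges G S d ⊆ S :=
  fun _ he => (mem_componentEdges.1 he).1

lemma reachVia_componentEdges {S : Finset (Sym2 V)} {d y : V} (h : ReachVia G S d y) :
    ReachVia G (componentEdges G S d) d y := by
  obtain ⟨p, hp⟩ := h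
  refine ⟨p, fun e he => mem_componentEdges.2 ⟨hp e he, ?_⟩⟩
  induction e using Sym2.ind with
  | _ a b =>
    exact ⟨a, Sym2.mem_mk_left a b, .of_mem_support hp (p.fst_mem_support_of_mem_edges he)⟩

lemma exists_reachVia_sdiff_componentEdges [DecidableEq V] {S T : Finset (Sym2 V)} {d a b : V}
    {p : G.Walk a b} (hp : ∀ e ∈ p.edges, e ∈ S ∨ e ∈ T) (hb : ReachVia G T d b) :
    ∃ β, ReachVia G (S ∪ (T \ componentEdges G T d)) a β ∧ ReachVia G T d β := by
  -- `β` is the first vertex of `p` in the component of `d`: no earlier edge lies in it.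
  induction p with
  | nil => exact ⟨_, .refl G _ _, hb⟩
  | @cons a v b hav q ih =>
    by_cases ha : ReachVia G T d a
    · exact ⟨a, .refl G _ _, ha⟩
    obtain ⟨β, hvβ, hβ⟩ := ih (fun e he => hp e (by simp [he])) hb
    refine ⟨β, .trans (.single hav ?_) hvβ, hβ⟩
    rcases hp s(a, v) (by simp) with hS | hT
    · exact Finset.mem_union_left _ hS
    · refine Finset.mem_union_right _ (Finset.mem_sdiff.2 ⟨hT, fun hC => ?_⟩)
      obtain ⟨y, hy, hdy⟩ := (mem_componentEdges.1 hC).2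
      rcases Sym2.mem_iff.1 hy with rfl | rfl
      · exact ha hdy
      · exact ha (hdy.trans (.single hav.symm (by rwa [Sym2.eq_swap])))

def ReachLE (G : SimpleGraph V) (D D' : V → Finset (Sym2 V)) : Prop :=
  ∀ x y, ReachVia G (D x) x y → ReachVia G (D' x) x y

lemma ReachLE.refl (G : SimpleGraph V) (D : V → Finset (Sym2 V)) : ReachLE G D D :=
  fun _ _ h => h

lemma ReachLE.trans {D D' D'' : V → Finset (Sym2 V)} (h : ReachLE G D D')
    (h' : ReachLE G D' D'') : ReachLE G D D'' :=
  fun x y hxy => h' x y (h x y hxy)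

section WellSat

variable {D : V → Finset (Sym2 V)} {u v : V}

lemma wellSat_self (G : SimpleGraph V) (D : V → Finset (Sym2 V)) (u : V) : WellSat G D u u :=
  ⟨u, ReachVia.refl G _ u, ReachVia.refl G _ u⟩

lemma WellSat.of_reachVia {β : V} (hu : ReachVia G (D u) u β) (hv : ReachVia G (D v) v β) :
    WellSat G D u v :=
  ⟨β, hu, hv.symm⟩

lemma WellSat.symm (h : WellSat G D u v) : WellSat G D v u :=
  let ⟨_, hu, hv⟩ := h
  .of_reachVia (ReachVia.symm hv) hu

lemma WellSat.mono {D' : V → Finset (Sym2 V)} (h : WellSat G D u v) (hD : ReachLE G D D') :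
    WellSat G D' u v :=
  let ⟨_, hu, hv⟩ := h
  .of_reachVia (hD _ _ hu) (hD _ _ (ReachVia.symm hv))

lemma satisfies_of_wellSat {R : Set (Sym2 V)} (h : ∀ u v, s(u, v) ∈ R → WellSat G D u v) :
    Satisfies G D R := by
  intro u v huv
  obtain ⟨_, ⟨p, hp⟩, ⟨q, hq⟩⟩ := h u v huv
  refine ⟨p.append q, fun e he => ?_⟩
  rw [SimpleGraph.Walk.edges_append, List.mem_append] at he
  exact he.imp (hp e) (hq e)

end WellSat

lemma sum_le_sum_of_ne_pair {ι M : Type*} [Fintype ι] [AddCommMonoid M]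
    [PartialOrder M] [IsOrderedAddMonoid M] {f g : ι → M} {i j : ι} (hij : i ≠ j)
    (h : ∀ k, k ≠ i → k ≠ j → g k = f k) (hpair : g i + g j ≤ f i + f j) :
    ∑ k, g k ≤ ∑ k, f k := by
  classical
  have hj : j ∈ univ.erase i := mem_erase.2 ⟨hij.symm, mem_univ j⟩
  rw [← add_sum_erase univ g (mem_univ i), ← add_sum_erase _ g hj,
    ← add_sum_erase univ f (mem_univ i), ← add_sum_erase _ f hj, ← add_assoc, ← add_assoc,
    sum_congr rfl fun k hk => h k (ne_of_mem_erase (mem_of_mem_erase hk)) (ne_of_mem_erase hk)]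
  exact add_le_add hpair le_rfl

/-- `d` keeps the edges of its own component and hands the rest of `D d` over to `r`. -/
lemma exists_transfer [Fintype V] {D : V → Finset (Sym2 V)}
    (hD : IsDispersal G D) {r d : V} (hrd : r ≠ d) {p : G.Walk r d}
    (hp : ∀ e ∈ p.edges, e ∈ D r ∨ e ∈ D d) :
    ∃ D', IsDispersal G D' ∧ cost D' ≤ cost D ∧ ReachLE G D D' ∧ (∀ x, x ≠ d → D x ⊆ D' x) ∧
      WellSat G D' r d := by
  classical
  set C := componentEdges G (D d) d
  set D' : V → Finset (Sym2 V) := fun x => if x = d then C else if x = r then D r ∪ (D d \ C)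
    else D x with hD'
  have hD'd : D' d = C := if_pos rfl
  have hD'r : D' r = D r ∪ (D d \ C) := by simp [hD', hrd]
  have hD'x : ∀ x, x ≠ r → x ≠ d → D' x = D x := fun x hr hd => by simp [hD', hr, hd]
  have hsub : ∀ x, x ≠ d → D x ⊆ D' x := fun x hxd => by
    rcases eq_or_ne x r with rfl | hxr
    · exact hD'r ▸ subset_union_left
    · exact (hD'x x hxr hxd).ge
  obtain ⟨β, hrβ, hdβ⟩ := exists_reachVia_sdiff_componentEdges hp (.refl G (D d) d)
  refine ⟨D', fun x e he => ?_, ?_, fun x y hxy => ?_, hsub, ?_⟩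
  · rcases eq_or_ne x d with rfl | hxd
    · exact hD x e (componentEdges_subset _ _ (hD'd ▸ he))
    rcases eq_or_ne x r with rfl | hxr
    · rw [hD'r, mem_union, mem_sdiff] at he
      exact he.elim (hD x e) (fun he => hD d e he.1)
    · exact hD x e (hD'x x hxr hxd ▸ he)
  · refine sum_le_sum_of_ne_pair hrd (fun x hxr hxd => by rw [hD'x x hxr hxd]) ?_
    calc (D' r).card + (D' d).card ≤ (D r).card + (D d \ C).card + C.card := by
          rw [hD'r, hD'd]; gcongr; exact card_union_le _ _
      _ = (D r).card + (D d).card := by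
          rw [add_assoc, card_sdiff_add_card_eq_card (componentEdges_subset _ _)]
  · rcases eq_or_ne x d with rfl | hxd
    · exact hD'd ▸ reachVia_componentEdges hxy
    · exact hxy.mono (hsub x hxd)
  · exact .of_reachVia (hD'r ▸ hrβ) (hD'd ▸ reachVia_componentEdges hdβ)

/-- The first vertex of a longest path in a finite forest is a leaf. -/
lemma SimpleGraph.IsAcyclic.exists_adj_forall_adj_eq [Finite V] {H : SimpleGraph V}
    (hH : H.IsAcyclic) {a b : V} (hab : H.Adj a b) :
    ∃ d r, H.Adj d r ∧ ∀ x, H.Adj d x → x = r := by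
  have : Nonempty V := ⟨a⟩
  obtain ⟨d, _, p, hp, hmax⟩ := Walk.exists_isPath_forall_isPath_length_le_length H
  have hnil : ¬ p.Nil := fun h => by
    have := hmax a b (.cons hab .nil) (by simpa using hab.ne)
    simp [Walk.length_eq_zero_iff.2 h] at this
  refine ⟨d, p.snd, p.adj_snd hnil, fun x hdx => hH.eq_snd_of_adj_start hp hdx ?_⟩
  by_contra hx
  have := hmax x _ (.cons hdx.symm p) (hp.cons hx)
  simp at this

lemma exists_wellSat_of_isAcyclic [Fintype V] (S : Finset (Sym2 V))
    (hS : (fromEdgeSet (S : Set (Sym2 V))).IsAcyclic) {D : V → Finset (Sym2 V)}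
    (hD : IsDispersal G D) (hsat : Satisfies G D S) :
    ∃ D', IsDispersal G D' ∧ cost D' ≤ cost D ∧ ReachLE G D D' ∧
      ∀ u v, s(u, v) ∈ S → WellSat G D' u v := by
  classical
  induction S using Finset.strongInduction generalizing D with
  | H S ih =>
  by_cases hadj : ∃ a b, (fromEdgeSet (S : Set (Sym2 V))).Adj a b
  swap
  · refine ⟨D, hD, le_rfl, .refl G D, fun u v huv => ?_⟩
    rcases eq_or_ne u v with rfl | hne
    · exact wellSat_self G D u
    · exact absurd ⟨u, v, (fromEdgeSet_adj _).2 ⟨huv, hne⟩⟩ hadj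
  obtain ⟨a, b, hab⟩ := hadj
  obtain ⟨d, r, hdr, hleaf⟩ := hS.exists_adj_forall_adj_eq hab
  obtain ⟨hdrS, hne⟩ := (fromEdgeSet_adj _).1 hdr
  obtain ⟨p, hp⟩ := hsat r d (by rwa [Sym2.eq_swap])
  obtain ⟨D₁, hD₁, hcost₁, hle₁, hsub₁, hwell₁⟩ := exists_transfer hD hne.symm hp
  have hsat₁ : Satisfies G D₁ (S.erase s(d, r) : Finset (Sym2 V)) := by
    intro u v huv
    obtain ⟨huv_ne, huvS⟩ := mem_erase.1 huv
    rcases eq_or_ne u v with rfl | huv'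
    · exact ⟨.nil, by simp⟩
    have hud : u ≠ d := by
      rintro rfl
      exact huv_ne (by rw [hleaf v ((fromEdgeSet_adj _).2 ⟨huvS, huv'⟩)])
    have hvd : v ≠ d := by
      rintro rfl
      rw [Sym2.eq_swap] at huvS huv_ne
      exact huv_ne (by rw [hleaf u ((fromEdgeSet_adj _).2 ⟨huvS, huv'.symm⟩)])
    obtain ⟨q, hq⟩ := hsat u v huvS
    exact ⟨q, fun e he => (hq e he).imp (hsub₁ u hud ·) (hsub₁ v hvd ·)⟩
  obtain ⟨D', hD', hcost', hle', hwell'⟩ := ih _ (erase_ssubset hdrS)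
    (hS.anti (fromEdgeSet_mono (by simp))) hD₁ hsat₁
  refine ⟨D', hD', hcost'.trans hcost₁, hle₁.trans hle', fun u v huv => ?_⟩
  by_cases he : s(u, v) = s(d, r)
  · have := hwell₁.mono hle'
    rcases Sym2.eq_iff.1 he with ⟨rfl, rfl⟩ | ⟨rfl, rfl⟩
    exacts [this.symm, this]
  · exact hwell' u v (mem_erase.2 ⟨he, huv⟩)

lemma cmin_le [Fintype V] {R : Set (Sym2 V)} {D : V → Finset (Sym2 V)} (hD : IsDispersal G D)
    (hsat : Satisfies G D R) : cmin G R ≤ cost D :=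
  Nat.sInf_le ⟨D, hD, hsat, rfl⟩

lemma exists_cost_eq_cmin [Fintype V] (hG : G.Connected) (R : Set (Sym2 V)) :
    ∃ D, IsDispersal G D ∧ Satisfies G D R ∧ cost D = cmin G R := by
  classical
  refine Nat.sInf_mem (s := {c | ∃ D, IsDispersal G D ∧ Satisfies G D R ∧ cost D = c})
    ⟨_, fun _ => G.edgeFinset, fun _ _ he => mem_edgeFinset.1 he, fun u v _ => ?_, rfl⟩
  obtain ⟨p⟩ := hG.preconnected u v
  exact ⟨p, fun e he => Or.inl (mem_edgeFinset.2 (p.edges_subset_edgeSet he))⟩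

end

theorem stmt8_general {V : Type*} [Fintype V] (G : SimpleGraph V) (hG : G.Connected)
    (R : Set (Sym2 V))
    (hacyc : (SimpleGraph.fromEdgeSet R).IsAcyclic) :
    ∃ D : V → Finset (Sym2 V), IsDispersal G D ∧ Satisfies G D R ∧
      cost D = cmin G R ∧ ∀ u v : V, s(u, v) ∈ R → WellSat G D u v := by
  obtain ⟨D₀, hD₀, hsat₀, hcost₀⟩ := exists_cost_eq_cmin hG R
  obtain ⟨D, hD, hcost, -, hwellR⟩ := exists_wellSat_of_isAcyclic R.toFinite.toFinset
    (by simpa using hacyc) hD₀ (by simpa using hsat₀)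
  have hwell : ∀ u v, s(u, v) ∈ R → WellSat G D u v := fun u v h => hwellR u v (by simpa using h)
  have hsat := satisfies_of_wellSat hwell
  exact ⟨D, hD, hsat, le_antisymm (hcost.trans hcost₀.le) (cmin_le hD hsat), hwell⟩

theorem stmt8 {V : Type*} [Fintype V] (G : SimpleGraph V) (hG : G.Connected)
    (R : Set (Sym2 V)) (hdiag : ∀ e ∈ R, ¬ e.IsDiag)
    (hacyc : (SimpleGraph.fromEdgeSet R).IsAcyclic)
    (htree : ∀ a ∈ (SimpleGraph.fromEdgeSet R).support,
      ∀ b ∈ (SimpleGraph.fromEdgeSet R).support, (SimpleGraph.fromEdgeSet R).Reachable a b) :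
    ∃ D : V → Finset (Sym2 V), IsDispersal G D ∧ Satisfies G D R ∧
      cost D = cmin G R ∧ ∀ u v : V, s(u, v) ∈ R → WellSat G D u v :=
  stmt8_general G hG R hacyc
end

section
/- Let T be a finite tree on vertex set V and let R be a request set on T. For each edge e = {u,v} of T, removing e splits T into two components with vertex sets V_u (containing u) and V_v (containing v); let B_{uv} be the bipartite graph on V_u ∪ V_v whose edge set is { {a,b} ∈ R : a ∈ V_u, b ∈ V_v }. Then a dispersal D of T satisfies R if and only if for every edge e = {u,v} of T, the set C_{uv} = { w ∈ V : e ∈ D_w } is a vertex cover of B_{uv}. -/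
open SimpleGraph Finset

/-- `C` is a vertex cover of the graph `B`: every edge of `B` is incident to a vertex
of `C`. -/
def IsVertexCover {V : Type*} (B : SimpleGraph V) (C : Set V) : Prop :=
  ∀ a b : V, B.Adj a b → a ∈ C ∨ b ∈ C

/-- The bipartite graph `B_{uv}` associated with the tree edge `{u,v}`: its edges are the
requests of `R` having one endpoint in the component `V_u` of `u` and the other in the
component `V_v` of `v` of the tree with the edge `{u,v}` deleted. -/
def Buv {V : Type*} (G : SimpleGraph V) (R : Set (Sym2 V)) (u v : V) : SimpleGraph V :=
  SimpleGraph.fromEdgeSet {f | f ∈ R ∧ ∃ a b : V, f = s(a, b) ∧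
    (G.deleteEdges {s(u, v)}).Reachable u a ∧ (G.deleteEdges {s(u, v)}).Reachable v b}

/-!
Since every tree edge `e = {u,v}` is a bridge, a walk between two vertices uses `e` whenever
they lie on different sides of `e`, and conversely the unique path between them uses `e` only
if they do. So the walks required by `Satisfies` exist exactly when every request `{a,b}`
crossing `e` has `e ∈ D a ∪ D b`, i.e. when `{w | e ∈ D w}` covers `B_{uv}`.
-/

namespace SimpleGraph

variable {V : Type*} {G : SimpleGraph V} {u v a b : V}

def SeparatedBy (G : SimpleGraph V) (u v a b : V) : Prop :=
  (G.deleteEdges {s(u, v)}).Reachable u a ∧ (G.deleteEdges {s(u, v)}).Reachable v b ∨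
    (G.deleteEdges {s(u, v)}).Reachable u b ∧ (G.deleteEdges {s(u, v)}).Reachable v a

lemma IsBridge.mem_edges_of_separatedBy (hb : G.IsBridge s(u, v))
    (hab : G.SeparatedBy u v a b) (p : G.Walk a b) : s(u, v) ∈ p.edges := by
  refine p.mem_edges_of_not_reachable_deleteEdges fun hp ↦ isBridge_iff.mp hb ?_
  rcases hab with ⟨hua, hvb⟩ | ⟨hub, hva⟩
  · exact hua.trans (hp.trans hvb.symm)
  · exact hub.trans (hp.symm.trans hva.symm)

lemma IsBridge.separatedBy_of_mem_edges (hb : G.IsBridge s(u, v)) {p : G.Walk a b}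
    (hp : p.IsTrail) (he : s(u, v) ∈ p.edges) : G.SeparatedBy u v a b := by
  have huv := isBridge_iff.mp hb
  have hv : (G.deleteEdges {s(u, v)}).Reachable a v ∨
      (G.deleteEdges {s(u, v)}).Reachable b v := by
    by_contra! h
    exact hp.not_mem_edges_of_not_reachable h.1 h.2 he
  have hu : (G.deleteEdges {s(u, v)}).Reachable a u ∨
      (G.deleteEdges {s(u, v)}).Reachable b u := by
    rw [Sym2.eq_swap] at he ⊢
    by_contra! h
    exact hp.not_mem_edges_of_not_reachable h.1 h.2 he
  rcases hu with hau | hbu <;> rcases hv with hav | hbv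
  · exact absurd (hau.symm.trans hav) huv
  · exact .inl ⟨hau.symm, hbv.symm⟩
  · exact .inr ⟨hbu.symm, hav.symm⟩
  · exact absurd (hbu.symm.trans hbv) huv

lemma buv_adj_iff (hb : G.IsBridge s(u, v)) {R : Set (Sym2 V)} :
    (Buv G R u v).Adj a b ↔ s(a, b) ∈ R ∧ G.SeparatedBy u v a b := by
  rw [Buv, fromEdgeSet_adj]
  constructor
  · rintro ⟨⟨hR, a', b', hab, hua, hvb⟩, -⟩
    refine ⟨hR, ?_⟩
    rcases Sym2.eq_iff.mp hab with ⟨rfl, rfl⟩ | ⟨rfl, rfl⟩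
    · exact .inl ⟨hua, hvb⟩
    · exact .inr ⟨hua, hvb⟩
  · rintro ⟨hR, hsep⟩
    refine ⟨⟨hR, ?_⟩, ?_⟩
    · rcases hsep with ⟨hua, hvb⟩ | ⟨hub, hva⟩
      · exact ⟨a, b, rfl, hua, hvb⟩
      · exact ⟨b, a, Sym2.eq_swap, hub, hva⟩
    · rintro rfl
      simpa using hb.mem_edges_of_separatedBy hsep Walk.nil

end SimpleGraph

theorem stmt11_general {V : Type*} (G : SimpleGraph V) (hT : G.IsTree)
    (R : Set (Sym2 V)) (D : V → Finset (Sym2 V)) :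
    Satisfies G D R ↔
      ∀ u v : V, G.Adj u v →
        _root_.IsVertexCover (Buv G R u v) {w : V | s(u, v) ∈ D w} := by
  have hbridge := isAcyclic_iff_forall_adj_isBridge.mp hT.isAcyclic
  constructor
  · intro hS u v huv a b hab
    obtain ⟨hR, hsep⟩ := (buv_adj_iff (hbridge huv)).mp hab
    obtain ⟨p, hp⟩ := hS a b hR
    exact hp _ ((hbridge huv).mem_edges_of_separatedBy hsep p)
  · intro hC a b hab
    obtain ⟨p, hp⟩ := hT.connected.exists_isPath a b
    refine ⟨p, fun e he ↦ ?_⟩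
    induction e using Sym2.ind with
    | _ u v =>
      have huv := p.adj_of_mem_edges he
      exact hC u v huv a b ((buv_adj_iff (hbridge huv)).mpr
        ⟨hab, (hbridge huv).separatedBy_of_mem_edges hp.isTrail he⟩)

theorem stmt11 {V : Type*} [Fintype V] (G : SimpleGraph V) (hT : G.IsTree)
    (R : Set (Sym2 V)) (D : V → Finset (Sym2 V)) (hD : IsDispersal G D) :
    Satisfies G D R ↔
      ∀ u v : V, G.Adj u v →
        _root_.IsVertexCover (Buv G R u v) {w : V | s(u, v) ∈ D w} :=
  stmt11_general G hT R D
end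

section
/- Let T be a finite tree on vertex set V and let R be a request set on T. For each edge e = {u,v} of T let B_{uv} be the bipartite graph on the two components of T − e whose edges are the requests in R having one endpoint in each component, and suppose for each edge e = {u,v} a vertex cover C_{uv} of B_{uv} is chosen. Then the dispersal D defined by D_w = { e = {u,v} ∈ E : w ∈ C_{uv} } satisfies R, and its cost equals Σ_{e={u,v} ∈ E} |C_{uv}|. -/
open SimpleGraph Finset

/-!
A request `{u, v}` is served along the path from `u` to `v`: every edge `{a, b}` of that path
separates `u` from `v`, so `{u, v}` is an edge of `B_{ab}` and one of `u`, `v` lies in the cover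
`C_{ab}`, i.e. holds `{a, b}`. The cost identity is double counting of the incidences
`w ∈ C_e`.
-/

section

variable {V : Type*} {G : SimpleGraph V}

lemma SimpleGraph.Walk.IsPath.reachable_deleteEdges_of_mem_edges {u v a b : V} {p : G.Walk u v}
    (hp : p.IsPath) (he : s(a, b) ∈ p.edges) :
    ((G.deleteEdges {s(a, b)}).Reachable a u ∧ (G.deleteEdges {s(a, b)}).Reachable b v) ∨
      ((G.deleteEdges {s(a, b)}).Reachable b u ∧ (G.deleteEdges {s(a, b)}).Reachable a v) := by
  induction p with
  | nil => simp at he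
  | @cons u w v huw q ih =>
    rw [Walk.cons_isPath_iff] at hp
    have hq : s(u, w) ∉ q.edges := fun h => hp.2 (q.fst_mem_support_of_mem_edges h)
    rw [Walk.edges_cons, List.mem_cons] at he
    rcases he with he | he
    · have hq' : (G.deleteEdges {s(a, b)}).Reachable w v :=
        ⟨q.toDeleteEdges {s(a, b)} fun e he' hea => hq (he ▸ hea ▸ he')⟩
      rcases Sym2.eq_iff.mp he with ⟨rfl, rfl⟩ | ⟨rfl, rfl⟩
      · exact .inl ⟨.rfl, hq'⟩
      · exact .inr ⟨.rfl, hq'⟩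
    · have huw' : (G.deleteEdges {s(a, b)}).Reachable u w :=
        Adj.reachable ((deleteEdges_adj ..).mpr ⟨huw, fun hea => hq (hea ▸ he)⟩)
      rcases ih hp.1 he with ⟨h₁, h₂⟩ | ⟨h₁, h₂⟩
      · exact .inl ⟨h₁.trans huw'.symm, h₂⟩
      · exact .inr ⟨h₁.trans huw'.symm, h₂⟩

lemma Buv_adj_of_mem_edges_of_isPath {R : Set (Sym2 V)} {u v a b : V} (hR : s(u, v) ∈ R)
    (huv : u ≠ v) {p : G.Walk u v} (hp : p.IsPath) (he : s(a, b) ∈ p.edges) :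
    (Buv G R a b).Adj u v := by
  rcases hp.reachable_deleteEdges_of_mem_edges he with ⟨hu, hv⟩ | ⟨hu, hv⟩
  · exact (fromEdgeSet_adj _).mpr ⟨⟨hR, u, v, rfl, hu, hv⟩, huv⟩
  · have hR' : s(v, u) ∈ R := Sym2.eq_swap ▸ hR
    have hvu : (Buv G R a b).Adj v u :=
      (fromEdgeSet_adj _).mpr ⟨⟨hR', v, u, rfl, hv, hu⟩, huv.symm⟩
    exact hvu.symm

open scoped Classical in
theorem satisfies_of_isVertexCover_Buv [Fintype V] (hG : G.Preconnected) {R : Set (Sym2 V)}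
    {C : Sym2 V → Finset V}
    (hC : ∀ u v : V, G.Adj u v → _root_.IsVertexCover (Buv G R u v) ↑(C s(u, v))) :
    Satisfies G (fun w => G.edgeFinset.filter (fun e => w ∈ C e)) R := by
  intro u v hR
  by_cases huv : u = v
  · subst huv
    exact ⟨.nil, by simp⟩
  obtain ⟨p, hp⟩ := (hG u v).some.toPath
  refine ⟨p, fun e he => ?_⟩
  induction e with
  | h a b =>
    have hab : G.Adj a b := p.edges_subset_edgeSet he
    have hmem : s(a, b) ∈ G.edgeFinset := mem_edgeFinset.mpr hab
    rcases hC a b hab u v (Buv_adj_of_mem_edges_of_isPath hR huv hp he) with hu | hv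
    · exact .inl (mem_filter.mpr ⟨hmem, hu⟩)
    · exact .inr (mem_filter.mpr ⟨hmem, hv⟩)

lemma cost_filter_mem [Fintype V] [DecidableEq V] (s : Finset (Sym2 V))
    (C : Sym2 V → Finset V) :
    cost (fun w => s.filter (fun e => w ∈ C e)) = ∑ e ∈ s, (C e).card := by
  calc cost (fun w => s.filter (fun e => w ∈ C e))
      = ∑ w, #(s.bipartiteAbove (fun w e => w ∈ C e) w) := rfl
    _ = ∑ e ∈ s, #(univ.bipartiteBelow (fun w e => w ∈ C e) e) :=
      sum_card_bipartiteAbove_eq_sum_card_bipartiteBelow _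
    _ = ∑ e ∈ s, (C e).card := by simp [bipartiteBelow]

end

open scoped Classical in
theorem stmt12 {V : Type*} [Fintype V] (G : SimpleGraph V) (hT : G.IsTree)
    (R : Set (Sym2 V)) (C : Sym2 V → Finset V)
    (hC : ∀ u v : V, G.Adj u v → _root_.IsVertexCover (Buv G R u v) ↑(C s(u, v))) :
    Satisfies G (fun w => G.edgeFinset.filter (fun e => w ∈ C e)) R ∧
      cost (fun w => G.edgeFinset.filter (fun e => w ∈ C e)) =
        ∑ e ∈ G.edgeFinset, (C e).card :=
  ⟨satisfies_of_isVertexCover_Buv hT.connected.preconnected hC, cost_filter_mem _ C⟩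
end
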